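/- arXiv:math/0508293 — 3 statements merged into one kernel-verified Lean document; each statement's English description precedes it below -/
import Mathlib

section
/- If two infinite cylinders of radius r in ℝ³ (around lines L₁, L₂) have boundary points touching at x with equal tangent planes at x, then there exist x₁ ∈ L₁ and x₂ ∈ L₂ with x the midpoint of the segment x₁x₂, ‖x₁ − x₂‖ = 2r, and x₂ − x₁ perpendicular to both L₁ and L₂. -/
lemma foot_perp (a d x p : EuclideanSpace ℝ (Fin 3)) (hd : d ≠ 0) (r : ℝ)
    (hpL : ∃ t : ℝ, p = a + t • d) (hpr : dist x p = r) (hr : 0 ≤ r)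
    (hmin : ∀ y : EuclideanSpace ℝ (Fin 3), (∃ t : ℝ, y = a + t • d) → r ≤ dist x y) :
    (inner ℝ (x - p) d : ℝ) = 0 := by
  obtain ⟨t₀, ht₀⟩ := hpL
  set c : ℝ := inner ℝ (x - p) d with hc
  have key : ∀ s : ℝ, 2 * s * c ≤ s ^ 2 * ‖d‖ ^ 2 := by
    intro s
    have h1 : r ≤ dist x (p + s • d) := hmin _ ⟨t₀ + s, by rw [ht₀, add_smul]; abel⟩
    have h2 : r ^ 2 ≤ dist x (p + s • d) ^ 2 := pow_le_pow_left₀ hr h1 2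
    have h3 : dist x (p + s • d) ^ 2 = ‖(x - p) - s • d‖ ^ 2 := by
      rw [dist_eq_norm]; congr 2; abel
    rw [h3, norm_sub_sq_real, norm_smul, real_inner_smul_right, ← hc] at h2
    have h4 : ‖x - p‖ = r := by rw [← dist_eq_norm]; exact hpr
    rw [h4] at h2
    simp only [Real.norm_eq_abs, mul_pow, sq_abs] at h2
    nlinarith
  have hdn : (0:ℝ) < ‖d‖ ^ 2 := by have := norm_pos_iff.mpr hd; positivity
  set q : ℝ := c / ‖d‖ ^ 2 with hqdef
  have hq : q * ‖d‖ ^ 2 = c := div_mul_cancel₀ c hdn.ne'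
  have hk := key q
  have h7 : q ^ 2 * ‖d‖ ^ 2 = q * c := by rw [sq, mul_assoc, hq]
  rw [h7] at hk
  have h8 : q * c ≤ 0 := by linarith
  have h9 : c ^ 2 ≤ 0 := by
    have hcc : c ^ 2 = (q * c) * ‖d‖ ^ 2 := by rw [mul_comm q c, mul_assoc, hq, sq]
    nlinarith
  have h10 : c ^ 2 = 0 := le_antisymm h9 (sq_nonneg c)
  exact pow_eq_zero_iff two_ne_zero |>.mp h10

/-- If two cylinders of radius `r` around lines `L₁ = {a₁ + t d₁}` and
`L₂ = {a₂ + t d₂}` touch at a point `x` with coinciding tangent planes (the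
normals `x − p₁` and `x − p₂` at the feet `p₁, p₂` are antiparallel), then there
are points `x₁ ∈ L₁`, `x₂ ∈ L₂` with `x` their midpoint, `‖x₁ − x₂‖ = 2r`, and
`x₂ − x₁` perpendicular to both lines. -/
theorem stmt13 (a₁ d₁ a₂ d₂ x p₁ p₂ : EuclideanSpace ℝ (Fin 3))
    (hd₁ : d₁ ≠ 0) (hd₂ : d₂ ≠ 0) (r : ℝ) (hr : 0 < r)
    (hp₁L : ∃ t : ℝ, p₁ = a₁ + t • d₁)
    (hp₂L : ∃ t : ℝ, p₂ = a₂ + t • d₂)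
    (hp₁r : dist x p₁ = r)
    (hp₂r : dist x p₂ = r)
    (hp₁min : ∀ y : EuclideanSpace ℝ (Fin 3), (∃ t : ℝ, y = a₁ + t • d₁) → r ≤ dist x y)
    (hp₂min : ∀ y : EuclideanSpace ℝ (Fin 3), (∃ t : ℝ, y = a₂ + t • d₂) → r ≤ dist x y)
    (hanti : x - p₂ = -(x - p₁)) :
    ∃ x₁ x₂ : EuclideanSpace ℝ (Fin 3),
      (∃ t : ℝ, x₁ = a₁ + t • d₁) ∧ (∃ t : ℝ, x₂ = a₂ + t • d₂) ∧
      x = midpoint ℝ x₁ x₂ ∧ ‖x₁ - x₂‖ = 2 * r ∧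
      (inner ℝ (x₂ - x₁) d₁ : ℝ) = 0 ∧ (inner ℝ (x₂ - x₁) d₂ : ℝ) = 0 := by
  have hsum : x + x = p₁ + p₂ := by
    rw [neg_sub] at hanti
    exact sub_eq_sub_iff_add_eq_add.mp hanti
  refine ⟨p₁, p₂, hp₁L, hp₂L, ?_, ?_, ?_, ?_⟩
  · rw [midpoint_eq_smul_add, ← hsum, smul_add]
    have : (⅟2 : ℝ) • x + (⅟2 : ℝ) • x = ((⅟2 : ℝ) + ⅟2) • x := (add_smul _ _ _).symm
    rw [this]
    norm_num
  · have h1 : p₁ - p₂ = (2:ℝ) • (p₁ - x) := by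
      rw [two_smul]
      have e : p₁ - p₂ = (p₁ - x) + (x - p₂) := by abel
      rw [e, hanti, neg_sub]
    rw [h1, norm_smul]
    rw [dist_comm, dist_eq_norm] at hp₁r
    simp [hp₁r]
  · have h1 := foot_perp a₁ d₁ x p₁ hd₁ r hp₁L hp₁r hr.le hp₁min
    have h2 : p₂ - p₁ = (2:ℝ) • (x - p₁) := by
      rw [two_smul]
      have e : p₂ - p₁ = -(x - p₂) + (x - p₁) := by abel
      rw [e, hanti, neg_neg]
    rw [h2, real_inner_smul_left, h1, mul_zero]
  · have h1 := foot_perp a₂ d₂ x p₂ hd₂ r hp₂L hp₂r hr.le hp₂min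
    have h2 : p₂ - p₁ = (2:ℝ) • (x - p₁) := by
      rw [two_smul]
      have e : p₂ - p₁ = -(x - p₂) + (x - p₁) := by abel
      rw [e, hanti, neg_neg]
    have h3 : x - p₁ = -(x - p₂) := by rw [hanti, neg_neg]
    rw [h2, real_inner_smul_left, h3, inner_neg_left, h1]
    ring
end

section
/- If r < Rad(v) for a vertex v with adjacent edges e₁ (from u to v) and e₂ (from v to w), then the angle-bisecting plane at v does not intersect the normal disk of radius r at the midpoint of the shorter adjacent edge; equivalently, the bisecting planes at the two endpoints of an edge e of a polygon with r < MinRad(K) do not intersect inside the solid tube of radius r around e. -/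
open Real

set_option maxHeartbeats 800000 in
private lemma stmt17aux {E : Type*} [NormedAddCommGroup E] [InnerProductSpace ℝ E]
    (d₁ d₂ p : E) (hd₁ : ‖d₁‖ = 1) (hd₂ : ‖d₂‖ = 1)
    (θ L r t : ℝ) (hL0 : 0 < L) (hr : 0 < r)
    (hcos : (inner ℝ d₁ d₂ : ℝ) = Real.cos θ) (hθ0 : 0 < θ) (hθπ : θ < π)
    (hrt : r * Real.tan (θ / 2) < L / 2)
    (hp : ‖p‖ ≤ r) (hpd : (inner ℝ p d₁ : ℝ) = 0)
    (hplane : (inner ℝ ((t - L) • d₁ + p) (d₁ + d₂) : ℝ) = 0) :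
    L / 2 < t := by
  have hdd : (inner ℝ d₁ d₁ : ℝ) = 1 := by
    rw [real_inner_self_eq_norm_sq, hd₁]; norm_num
  have hplane' : (t - L) * (1 + Real.cos θ) + (inner ℝ p d₂ : ℝ) = 0 := by
    rw [inner_add_right, inner_add_left, inner_add_left, real_inner_smul_left,
      real_inner_smul_left, hdd, hpd, hcos] at hplane
    linarith
  have hkey : (inner ℝ p d₂ : ℝ) = inner ℝ p (d₂ - Real.cos θ • d₁) := by
    rw [inner_sub_right, real_inner_smul_right, hpd]; ring
  have hsin0 : 0 < Real.sin θ := Real.sin_pos_of_pos_of_lt_pi hθ0 hθπ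
  have hsq : ‖d₂ - Real.cos θ • d₁‖ ^ 2 = Real.sin θ ^ 2 := by
    have hcos' : (inner ℝ d₂ d₁ : ℝ) = Real.cos θ := by rw [real_inner_comm]; exact hcos
    rw [norm_sub_sq_real, real_inner_smul_right, hcos', norm_smul,
      hd₁, hd₂, Real.norm_eq_abs]
    have h1 := Real.sin_sq_add_cos_sq θ
    have h2 := sq_abs (Real.cos θ)
    nlinarith
  have hbound : ‖d₂ - Real.cos θ • d₁‖ ≤ Real.sin θ := by
    nlinarith [norm_nonneg (d₂ - Real.cos θ • d₁)]
  have habs : |(inner ℝ p (d₂ - Real.cos θ • d₁) : ℝ)| ≤ r * Real.sin θ :=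
    (abs_real_inner_le_norm _ _).trans
      (mul_le_mul hp hbound (norm_nonneg _) hr.le)
  -- trig
  have hhalf0 : 0 < θ / 2 := by linarith
  have hhalfπ : θ / 2 < π / 2 := by linarith
  have hcoshalf : 0 < Real.cos (θ / 2) := Real.cos_pos_of_mem_Ioo ⟨by linarith, hhalfπ⟩
  have hsin2 : Real.sin θ = 2 * Real.sin (θ / 2) * Real.cos (θ / 2) := by
    rw [show θ = 2 * (θ / 2) by ring, Real.sin_two_mul]; ring_nf
  have hcos2 : Real.cos θ = 2 * Real.cos (θ / 2) ^ 2 - 1 := by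
    rw [show θ = 2 * (θ / 2) by ring, Real.cos_two_mul]; ring_nf
  have h3 : r * (Real.sin (θ / 2) / Real.cos (θ / 2)) < L / 2 := by
    rw [← Real.tan_eq_sin_div_cos]; exact hrt
  have h4 : r * Real.sin (θ / 2) < L / 2 * Real.cos (θ / 2) := by
    have h5 := mul_lt_mul_of_pos_right h3 hcoshalf
    have h6 : r * (Real.sin (θ / 2) / Real.cos (θ / 2)) * Real.cos (θ / 2)
        = r * Real.sin (θ / 2) := by field_simp
    rw [h6] at h5; exact h5
  have hfinal : r * Real.sin θ < (L / 2) * (1 + Real.cos θ) := by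
    rw [hsin2, hcos2]
    nlinarith [mul_lt_mul_of_pos_right h4 hcoshalf]
  have hcospos : 0 < 1 + Real.cos θ := by
    rw [hcos2]; nlinarith [sq_nonneg (Real.cos (θ / 2)), hcoshalf]
  have h5 : (L - t) * (1 + Real.cos θ) ≤ r * Real.sin θ := by
    have h7 := (abs_le.mp habs).2
    rw [← hkey] at h7
    nlinarith [hplane', h7]
  have h9 : L - t < L / 2 :=
    (mul_lt_mul_iff_of_pos_right hcospos).mp (h5.trans_lt hfinal)
  linarith


/-- If `r < Rad(v) = min(‖u−v‖, ‖w−v‖)/(2 tan (θ/2))` where `θ` is the turning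
angle at `v` between the edges `e₁ = [u,v]` and `e₂ = [v,w]`, then the
angle-bisecting plane at `v` (through `v`, with normal `d₁ + d₂` where
`d₁, d₂` are the unit directions of the two edges) meets the solid cylinder of
radius `r` about `e₁` only at points whose orthogonal projection onto the line
of `e₁` lies strictly beyond the midpoint of `e₁`, toward `v`. -/
theorem stmt17 (u v w : EuclideanSpace ℝ (Fin 3)) (huv : u ≠ v) (hvw : v ≠ w)
    (r θ : ℝ) (hr : 0 < r)
    (hθ : θ = π - EuclideanGeometry.angle u v w) (hθ0 : 0 < θ) (hθπ : θ < π)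
    (hrRad : r < min ‖u - v‖ ‖w - v‖ / (2 * Real.tan (θ / 2))) :
    ∀ y : EuclideanSpace ℝ (Fin 3),
      (inner ℝ (y - v) (‖v - u‖⁻¹ • (v - u) + ‖w - v‖⁻¹ • (w - v)) : ℝ) = 0 →
      ∀ t : ℝ, t = (inner ℝ (y - u) (‖v - u‖⁻¹ • (v - u)) : ℝ) →
        0 ≤ t → t ≤ ‖v - u‖ →
        ‖y - (u + t • (‖v - u‖⁻¹ • (v - u)))‖ ≤ r →
        ‖v - u‖ / 2 < t := by
  intro y hplane t ht ht0 htL hdist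
  have hvu : v - u ≠ 0 := sub_ne_zero.mpr (Ne.symm huv)
  have hwv : w - v ≠ 0 := sub_ne_zero.mpr (Ne.symm hvw)
  have hL0 : (0:ℝ) < ‖v - u‖ := norm_pos_iff.mpr hvu
  have hM0 : (0:ℝ) < ‖w - v‖ := norm_pos_iff.mpr hwv
  obtain ⟨d₁, hd₁def⟩ : ∃ d : EuclideanSpace ℝ (Fin 3), ‖v - u‖⁻¹ • (v - u) = d := ⟨_, rfl⟩
  obtain ⟨d₂, hd₂def⟩ : ∃ d : EuclideanSpace ℝ (Fin 3), ‖w - v‖⁻¹ • (w - v) = d := ⟨_, rfl⟩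
  rw [hd₁def, hd₂def] at hplane
  rw [hd₁def] at ht hdist
  obtain ⟨p, hpdef⟩ : ∃ q : EuclideanSpace ℝ (Fin 3), y - (u + t • d₁) = q := ⟨_, rfl⟩
  rw [hpdef] at hdist
  have hd₁ : ‖d₁‖ = 1 := by rw [← hd₁def]; exact norm_smul_inv_norm hvu
  have hd₂ : ‖d₂‖ = 1 := by rw [← hd₂def]; exact norm_smul_inv_norm hwv
  have hdd : (inner ℝ d₁ d₁ : ℝ) = 1 := by
    rw [real_inner_self_eq_norm_sq, hd₁]; norm_num
  have hcos : (inner ℝ d₁ d₂ : ℝ) = Real.cos θ := by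
    have hang : EuclideanGeometry.angle u v w = InnerProductGeometry.angle (u - v) (w - v) := by
      rw [EuclideanGeometry.angle]
      norm_num [vsub_eq_sub]
    have hc := InnerProductGeometry.cos_angle (u - v) (w - v)
    rw [hθ, Real.cos_pi_sub, hang, hc]
    have h1 : (inner ℝ d₁ d₂ : ℝ) = ‖v - u‖⁻¹ * ‖w - v‖⁻¹ * inner ℝ (v - u) (w - v) := by
      rw [← hd₁def, ← hd₂def, real_inner_smul_left, real_inner_smul_right]; ring
    have h2 : (inner ℝ (v - u) (w - v) : ℝ) = - inner ℝ (u - v) (w - v) := by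
      rw [show v - u = -(u - v) by abel, inner_neg_left]
    have h3 : ‖u - v‖ = ‖v - u‖ := norm_sub_rev _ _
    rw [h1, h2, h3]
    field_simp
  have hpd : (inner ℝ p d₁ : ℝ) = 0 := by
    rw [← hpdef, show y - (u + t • d₁) = (y - u) - t • d₁ by abel, inner_sub_left,
      real_inner_smul_left, hdd, ← ht]
    ring
  have hLd₁ : ‖v - u‖ • d₁ = v - u := by
    rw [← hd₁def, smul_smul, mul_inv_cancel₀ hL0.ne', one_smul]
  have hyv : y - v = (t - ‖v - u‖) • d₁ + p := by
    rw [← hpdef, sub_smul, hLd₁]; abel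
  rw [hyv] at hplane
  -- the tangent bound
  have hhalf0 : 0 < θ / 2 := by linarith
  have hhalfπ : θ / 2 < π / 2 := by linarith
  have htan : 0 < Real.tan (θ / 2) := Real.tan_pos_of_pos_of_lt_pi_div_two hhalf0 hhalfπ
  have hrt : r * Real.tan (θ / 2) < ‖v - u‖ / 2 := by
    have h2t : (0:ℝ) < 2 * Real.tan (θ / 2) := by linarith
    have hmin : min ‖u - v‖ ‖w - v‖ ≤ ‖v - u‖ := by
      rw [norm_sub_rev u v]; exact min_le_left _ _
    have h1 : r < ‖v - u‖ / (2 * Real.tan (θ / 2)) := by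
      refine hrRad.trans_le ?_
      gcongr
    have h2 : r * (2 * Real.tan (θ / 2)) < ‖v - u‖ := (lt_div_iff₀ h2t).mp h1
    linarith
  exact stmt17aux d₁ d₂ p hd₁ hd₂ θ ‖v - u‖ r t hL0 hr hcos hθ0 hθπ hrt hdist hpd hplane
end

section
/- If (x₀,y₀) realizes the minimum distance over the closed set TC(K) = {(x,y) : tc(x,y) ≥ π} ⊆ K×K, and every boundary point of TC(K) has distance ≥ 2·MinRad(K) while ‖x₀ − y₀‖ < 2·MinRad(K), then (x₀,y₀) lies in the interior of TC(K) and is a local minimum of the distance function on K×K; hence x₀ and y₀ are local minimum turning points of d_{y₀} and d_{x₀} respectively. -/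
/-- If `(x₀, y₀)` minimizes the distance over a closed set `TC` of pairs of
points of the knot `K` (a metric space), every frontier point of `TC` has
distance at least `2 MinRad`, and `dist x₀ y₀ < 2 MinRad`, then `(x₀, y₀)` lies
in the interior of `TC` and is a local minimum of the distance function on
`K × K`; in particular `y₀` is a local minimum of `d_{x₀}` and `x₀` is a local
minimum of `d_{y₀}`. -/
theorem stmt19 (K : Type*) [MetricSpace K] (TC : Set (K × K)) (hTC : IsClosed TC)
    (MinRad : ℝ) (x₀ y₀ : K) (hmem : (x₀, y₀) ∈ TC)
    (hmin : ∀ p ∈ TC, dist x₀ y₀ ≤ dist p.1 p.2)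
    (hfr : ∀ p ∈ frontier TC, 2 * MinRad ≤ dist p.1 p.2)
    (hlt : dist x₀ y₀ < 2 * MinRad) :
    (x₀, y₀) ∈ interior TC ∧
      IsLocalMin (fun p : K × K => dist p.1 p.2) (x₀, y₀) ∧
      IsLocalMin (fun y : K => dist x₀ y) y₀ ∧
      IsLocalMin (fun x : K => dist x y₀) x₀ := by
  have hnotfr : (x₀, y₀) ∉ frontier TC := fun h =>
    absurd (hfr _ h) (not_le.mpr hlt)
  have hint : (x₀, y₀) ∈ interior TC := by
    by_contra h
    exact hnotfr (hTC.frontier_eq ▸ ⟨hmem, h⟩)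
  have hnhds : TC ∈ nhds (x₀, y₀) := mem_interior_iff_mem_nhds.mp hint
  have hloc : IsLocalMin (fun p : K × K => dist p.1 p.2) (x₀, y₀) :=
    Filter.eventually_of_mem hnhds fun p hp => hmin p hp
  refine ⟨hint, hloc, ?_, ?_⟩
  · have hc : Continuous fun y : K => ((x₀, y) : K × K) :=
      (continuous_const.prodMk continuous_id)
    show IsLocalMin ((fun p : K × K => dist p.1 p.2) ∘ fun y : K => (x₀, y)) y₀
    exact hloc.comp_continuous hc.continuousAt
  · have hc : Continuous fun x : K => ((x, y₀) : K × K) :=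
      (continuous_id.prodMk continuous_const)
    exact Filter.eventually_of_mem (hc.continuousAt.preimage_mem_nhds hnhds)
      fun x hx => hmin _ hx
end
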